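/- arXiv:1712.02315 — 2 statements merged into one kernel-verified Lean document; each statement's English description precedes it below -/
import Mathlib

section
/- Let n ≥ 1 and let T ⊆ ℝⁿ be an infinite countable set whose intersection with every bounded set is finite, satisfying the angular condition and the radial condition. Let F be a face of a compact axis-parallel box in ℝⁿ, i.e. F = {x ∈ ∏ᵢ [aᵢ, bᵢ] : x_j = c} for some index j and c ∈ {a_j, b_j}, where aᵢ ≤ bᵢ for all i. Then #(T ∩ rF) = o(N(r)) as r → ∞, i.e. lim_{r→∞} #(T ∩ rF)/N(r) = 0. -/
open MeasureTheory Metric Filter Topology Pointwise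

/-- The number of points of a set, as a real number (finite sets in view). -/
noncomputable def cnt {α : Type*} (S : Set α) : ℝ := Nat.card S

/-- `N(r)`: the number of points of `T` of norm `< r`. -/
noncomputable def NN {n : ℕ} (T : Set (EuclideanSpace ℝ (Fin n))) (r : ℝ) : ℝ :=
  cnt (T ∩ ball 0 r)

/-- The wedge `W(X, r)` over a subset `X` of the unit sphere. -/
def Wedge {n : ℕ} (X : Set (EuclideanSpace ℝ (Fin n))) (r : ℝ) :
    Set (EuclideanSpace ℝ (Fin n)) :=
  {x | 0 < ‖x‖ ∧ ‖x‖ < r ∧ ‖x‖⁻¹ • x ∈ X}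

/-- The angular equidistribution condition. -/
def AngularCond {n : ℕ} (T : Set (EuclideanSpace ℝ (Fin n))) : Prop :=
  ∀ X ⊆ sphere (0 : EuclideanSpace ℝ (Fin n)) 1, MeasurableSet X →
    volume (frontier (Wedge X 1)) = 0 →
    Tendsto (fun r => cnt (T ∩ Wedge X r) / NN T r) atTop
      (𝓝 ((volume (Wedge X 1)).toReal /
        (volume (ball (0 : EuclideanSpace ℝ (Fin n)) 1)).toReal))

/-- The radial (growth) condition: `N(λr)/N(r) → λⁿ`. -/
def RadialCond {n : ℕ} (T : Set (EuclideanSpace ℝ (Fin n))) : Prop :=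
  ∀ lam : ℝ, 0 < lam →
    Tendsto (fun r => NN T (lam * r) / NN T r) atTop (𝓝 (lam ^ n))

/-!
A face of a box lies in a box with a degenerate side, so for every `ε` it is covered by finitely
many closed balls of a common radius `ρ` with (number of balls) `· ρⁿ < ε`. It therefore suffices
that `#(T ∩ r • closedBall p ρ) / N(r)` is eventually below `2 (5ρ)ⁿ`. A ball near the origin
lies in `ball 0 (5ρ)`, and the radial condition applies. A ball far from the origin lies in a
conical shell `{x ∈ C : ‖p‖ - ρ ≤ ‖x‖ < ‖p‖ + 2ρ}` over a thin open convex cone `C` around `p`;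
the shell lies in `ball p (3ρ)`, and its count is a difference of two wedge counts, governed by
the angular and radial conditions (convexity of `C` makes the boundary of the wedge null).
-/

open Set

section Counting

variable {α : Type*}

lemma cnt_eq_ncard (S : Set α) : cnt S = S.ncard := by
  rw [cnt, Nat.card_coe_set_eq]

lemma cnt_nonneg (S : Set α) : 0 ≤ cnt S := Nat.cast_nonneg _

lemma cnt_mono {S S' : Set α} (h : S ⊆ S') (hS' : S'.Finite) : cnt S ≤ cnt S' := by
  simpa only [cnt_eq_ncard, Nat.cast_le] using ncard_le_ncard h hS'

lemma cnt_diff {S S' : Set α} (h : S' ⊆ S) (hS : S.Finite) :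
    cnt (S \ S') = cnt S - cnt S' := by
  rw [cnt_eq_ncard, cnt_eq_ncard, cnt_eq_ncard, ncard_sdiff h (hS.subset h),
    Nat.cast_sub (ncard_le_ncard h hS)]

lemma cnt_biUnion_le {ι : Type*} (s : Finset ι) (f : ι → Set α) :
    cnt (⋃ i ∈ s, f i) ≤ ∑ i ∈ s, cnt (f i) := by
  simp only [cnt_eq_ncard]
  exact_mod_cast s.set_ncard_biUnion_le f

end Counting

section Cone

variable {F : Type*} [NormedAddCommGroup F] [InnerProductSpace ℝ F]

/-- The open circular cone with axis `p` and half-angle `arccos c` (for `p ≠ 0`, `-1 ≤ c < 1`). -/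
def openCone (p : F) (c : ℝ) : Set F :=
  {x | c * (‖p‖ * ‖x‖) < inner ℝ x p}

lemma isOpen_openCone (p : F) (c : ℝ) : IsOpen (openCone p c) :=
  isOpen_lt (by fun_prop) (by fun_prop)

lemma zero_notMem_openCone (p : F) (c : ℝ) : (0 : F) ∉ openCone p c := by
  simp [openCone]

lemma smul_mem_openCone {p x : F} {c t : ℝ} (hx : x ∈ openCone p c) (ht : 0 < t) :
    t • x ∈ openCone p c := by
  simp only [openCone, mem_ofPred_eq, norm_smul, Real.norm_of_nonneg ht.le,
    real_inner_smul_left] at hx ⊢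
  nlinarith

lemma convex_openCone (p : F) {c : ℝ} (hc : 0 ≤ c) : Convex ℝ (openCone p c) := by
  intro x hx y hy s t hs ht hst
  have hnorm : ‖s • x + t • y‖ ≤ s * ‖x‖ + t * ‖y‖ := by
    simpa [norm_smul, Real.norm_of_nonneg hs, Real.norm_of_nonneg ht] using
      norm_add_le (s • x) (t • y)
  simp only [openCone, mem_ofPred_eq, inner_add_left, real_inner_smul_left] at hx hy ⊢
  rcases hs.eq_or_lt with rfl | hs
  · obtain rfl : t = 1 := by linarith
    simpa using hy
  calc c * (‖p‖ * ‖s • x + t • y‖) ≤ c * (‖p‖ * (s * ‖x‖ + t * ‖y‖)) := by gcongr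
    _ = s * (c * (‖p‖ * ‖x‖)) + t * (c * (‖p‖ * ‖y‖)) := by ring
    _ < s * inner ℝ x p + t * inner ℝ y p :=
      add_lt_add_of_lt_of_le (by gcongr) (by gcongr)

lemma mem_openCone_of_mem_closedBall {p z : F} {ρ : ℝ} (hρ : 0 < ρ) (hp : 4 * ρ ≤ ‖p‖)
    (hz : z ∈ closedBall p ρ) : z ∈ openCone p (1 - (ρ / ‖p‖) ^ 2) := by
  have hzp : ‖z - p‖ ≤ ρ := mem_closedBall_iff_norm.1 hz
  have hlo : ‖p‖ - ρ ≤ ‖z‖ := by linarith [norm_sub_norm_le p z, norm_sub_rev p z]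
  have hpos : 0 < ‖p‖ := by linarith
  have hinner : ‖z‖ ^ 2 + ‖p‖ ^ 2 - ρ ^ 2 ≤ 2 * inner ℝ z p := by
    nlinarith [norm_sub_sq_real z p, norm_nonneg (z - p)]
  show (1 - (ρ / ‖p‖) ^ 2) * (‖p‖ * ‖z‖) < inner ℝ z p
  rw [show (1 - (ρ / ‖p‖) ^ 2) * (‖p‖ * ‖z‖) = (‖p‖ ^ 2 - ρ ^ 2) * ‖z‖ / ‖p‖ by
    field_simp, div_lt_iff₀ hpos]
  -- `‖p‖ (‖z‖² + ‖p‖² - ρ²) - 2 (‖p‖² - ρ²) ‖z‖ = ‖p‖ (‖z‖ - ‖p‖)² + ρ² (2‖z‖ - ‖p‖) > 0`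
  nlinarith [mul_nonneg hpos.le (sq_nonneg (‖z‖ - ‖p‖)),
    mul_pos (pow_pos hρ 2) (by linarith : 0 < 2 * ‖z‖ - ‖p‖)]

lemma mem_ball_of_mem_openCone {p y : F} {ρ : ℝ} (hρ : 0 < ρ) (hp : 4 * ρ ≤ ‖p‖)
    (hy : y ∈ openCone p (1 - (ρ / ‖p‖) ^ 2)) (hlo : ‖p‖ - ρ ≤ ‖y‖) (hhi : ‖y‖ < ‖p‖ + 2 * ρ) :
    y ∈ ball p (3 * ρ) := by
  have hpos : 0 < ‖p‖ := by linarith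
  replace hy : (‖p‖ ^ 2 - ρ ^ 2) * ‖y‖ < inner ℝ y p * ‖p‖ := by
    rw [← div_lt_iff₀ hpos, ← show (1 - (ρ / ‖p‖) ^ 2) * (‖p‖ * ‖y‖)
      = (‖p‖ ^ 2 - ρ ^ 2) * ‖y‖ / ‖p‖ by field_simp]
    exact hy
  have hdev : (‖y‖ - ‖p‖) ^ 2 ≤ (2 * ρ) ^ 2 := by nlinarith
  have hsq : ‖p‖ * ‖y - p‖ ^ 2 < ‖p‖ * (3 * ρ) ^ 2 := by
    rw [norm_sub_sq_real]
    nlinarith [mul_le_mul_of_nonneg_left hdev hpos.le, mul_lt_mul_of_pos_left hhi (pow_pos hρ 2)]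
  rw [mem_ball_iff_norm]
  exact lt_of_pow_lt_pow_left₀ 2 (by positivity) (lt_of_mul_lt_mul_left hsq hpos.le)

end Cone

section Grid

lemma abs_sub_add_mul_floor_le {a y δ : ℝ} (hδ : 0 < δ) (hy : a ≤ y) :
    |y - (a + δ * ⌊(y - a) / δ⌋₊)| ≤ δ := by
  have hlo := Nat.floor_le (div_nonneg (sub_nonneg.2 hy) hδ.le)
  have hhi := Nat.lt_floor_add_one ((y - a) / δ)
  rw [le_div_iff₀ hδ] at hlo
  rw [div_lt_iff₀ hδ] at hhi
  rw [abs_le]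
  constructor <;> nlinarith

lemma exists_grid_approx {ι : Type*} {A B x : ι → ℝ} {δ : ℝ} (hδ : 0 < δ)
    (hx : ∀ i, x i ∈ Icc (A i) (B i)) :
    ∃ κ : ∀ i, Fin (⌊(B i - A i) / δ⌋₊ + 1), ∀ i, |x i - (A i + δ * κ i)| ≤ δ :=
  ⟨fun i => ⟨⌊(x i - A i) / δ⌋₊,
      Nat.lt_succ_of_le (Nat.floor_le_floor (by gcongr; exact (hx i).2))⟩,
    fun i => abs_sub_add_mul_floor_le hδ (hx i).1⟩

variable {ι : Type*} [Fintype ι]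

lemma dist_le_sqrt_card_mul {x y : EuclideanSpace ℝ ι} {t : ℝ} (ht : 0 ≤ t)
    (h : ∀ i, |x i - y i| ≤ t) : dist x y ≤ √(Fintype.card ι) * t := by
  rw [EuclideanSpace.dist_eq, ← Real.sqrt_sq ht, ← Real.sqrt_mul (Nat.cast_nonneg _)]
  refine Real.sqrt_le_sqrt ?_
  calc ∑ i, dist (x i) (y i) ^ 2 ≤ ∑ _i : ι, t ^ 2 :=
        Finset.sum_le_sum fun i _ => pow_le_pow_left₀ (abs_nonneg _) (h i) 2
    _ = Fintype.card ι * t ^ 2 := by simp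

lemma card_grid_mul_pow_le [DecidableEq ι] {A B : ι → ℝ} {δ : ℝ} (hδ : 0 < δ) (hδ1 : δ ≤ 1)
    {j : ι} (hj : A j = B j) :
    (Fintype.card (∀ i, Fin (⌊(B i - A i) / δ⌋₊ + 1)) : ℝ) * δ ^ Fintype.card ι ≤
      δ * ∏ i ∈ Finset.univ.erase j, (|B i - A i| + 1) := by
  have hfactor : ∀ i, ((⌊(B i - A i) / δ⌋₊ : ℝ) + 1) * δ ≤ |B i - A i| + 1 := fun i => by
    have h := (Nat.cast_le.2 (Nat.floor_le_floor (div_le_div_of_nonneg_right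
      (le_abs_self (B i - A i)) hδ.le))).trans (Nat.floor_le (by positivity))
    rw [le_div_iff₀ hδ] at h
    nlinarith
  simp only [Fintype.card_pi, Fintype.card_fin]
  rw [← Finset.card_univ, ← Finset.prod_const]
  push_cast
  rw [← Finset.prod_mul_distrib, ← Finset.mul_prod_erase _ _ (Finset.mem_univ j), hj, sub_self,
    zero_div, Nat.floor_zero, Nat.cast_zero, zero_add, one_mul]
  exact mul_le_mul_of_nonneg_left (Finset.prod_le_prod (fun i _ => by positivity)
    fun i _ => hfactor i) hδ.le

end Grid

section Euclidean

variable {n : ℕ}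

local notation "E" => EuclideanSpace ℝ (Fin n)

lemma wedge_subset_ball (X : Set E) (r : ℝ) : Wedge X r ⊆ ball 0 r :=
  fun _ hx => mem_ball_zero_iff.2 hx.2.1

lemma wedge_mono (X : Set E) {r r' : ℝ} (h : r ≤ r') : Wedge X r ⊆ Wedge X r' :=
  fun _ hx => ⟨hx.1, hx.2.1.trans_le h, hx.2.2⟩

lemma smul_wedge (X : Set E) {l : ℝ} (hl : 0 < l) (r : ℝ) : l • Wedge X r = Wedge X (l * r) := by
  ext x
  have hnorm : ‖l⁻¹ • x‖ = l⁻¹ * ‖x‖ := by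
    rw [norm_smul, Real.norm_of_nonneg (inv_nonneg.2 hl.le)]
  have hdir : (l⁻¹ * ‖x‖)⁻¹ • l⁻¹ • x = ‖x‖⁻¹ • x := by
    rw [smul_smul, mul_inv, inv_inv, mul_assoc, mul_comm, mul_assoc, inv_mul_cancel₀ hl.ne',
      mul_one]
  simp only [mem_smul_set_iff_inv_smul_mem₀ hl.ne', Wedge, mem_ofPred_eq, hdir, hnorm,
    mul_pos_iff_of_pos_left (inv_pos.2 hl), inv_mul_lt_iff₀ hl]

lemma volume_wedge (X : Set E) {l : ℝ} (hl : 0 < l) :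
    volume (Wedge X l) = ENNReal.ofReal (l ^ n) * volume (Wedge X 1) := by
  rw [← mul_one l, ← smul_wedge X hl, Measure.addHaar_smul_of_nonneg volume hl.le,
    finrank_euclideanSpace_fin, mul_one]

lemma wedge_sphere_inter_eq {C : Set E} (h0 : (0 : E) ∉ C)
    (hC : ∀ x ∈ C, ∀ t : ℝ, 0 < t → t • x ∈ C) (r : ℝ) :
    Wedge (sphere 0 1 ∩ C) r = C ∩ ball 0 r := by
  ext x
  constructor
  · rintro ⟨hx0, hxr, -, hxC⟩
    refine ⟨?_, mem_ball_zero_iff.2 hxr⟩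
    simpa [smul_smul, hx0.ne'] using hC _ hxC ‖x‖ hx0
  · rintro ⟨hxC, hxr⟩
    have hx0 : 0 < ‖x‖ := norm_pos_iff.2 (ne_of_mem_of_not_mem hxC h0)
    exact ⟨hx0, mem_ball_zero_iff.1 hxr, by simp [norm_smul, hx0.ne'],
      hC _ hxC _ (inv_pos.2 hx0)⟩

lemma wedge_sphere_inter_openCone (p : E) (c r : ℝ) :
    Wedge (sphere 0 1 ∩ openCone p c) r = openCone p c ∩ ball 0 r :=
  wedge_sphere_inter_eq (zero_notMem_openCone p c) (fun _ hx _ ht => smul_mem_openCone hx ht) r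

def IsAngularTestSet (X : Set E) : Prop :=
  X ⊆ sphere 0 1 ∧ MeasurableSet X ∧ volume (frontier (Wedge X 1)) = 0

lemma isAngularTestSet_sphere_inter_openCone (p : E) {c : ℝ} (hc : 0 ≤ c) :
    IsAngularTestSet (sphere 0 1 ∩ openCone p c) := by
  refine ⟨inter_subset_left, isClosed_sphere.measurableSet.inter
    (isOpen_openCone p c).measurableSet, ?_⟩
  rw [wedge_sphere_inter_openCone]
  exact ((convex_openCone p hc).inter (convex_ball 0 1)).addHaar_frontier volume

lemma NN_nonneg (T : Set E) (r : ℝ) : 0 ≤ NN T r := cnt_nonneg _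

lemma tendsto_cnt_wedge_mul {T : Set E}
    (hfin : ∀ S : Set E, Bornology.IsBounded S → (T ∩ S).Finite)
    (hang : AngularCond T) (hrad : RadialCond T) {X : Set E} (hX : IsAngularTestSet X)
    {l : ℝ} (hl : 0 < l) :
    Tendsto (fun r => cnt (T ∩ Wedge X (l * r)) / NN T r) atTop
      (𝓝 ((volume (Wedge X l)).toReal / (volume (ball (0 : E) 1)).toReal)) := by
  have hprod := ((hang X hX.1 hX.2.1 hX.2.2).comp
    (tendsto_id.const_mul_atTop hl)).mul (hrad l hl)
  rw [volume_wedge X hl, ENNReal.toReal_mul, ENNReal.toReal_ofReal (by positivity),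
    mul_div_assoc, mul_comm]
  refine hprod.congr fun r => ?_
  change cnt (T ∩ Wedge X (l * r)) / NN T (l * r) * (NN T (l * r) / NN T r) = _
  rcases eq_or_ne (NN T (l * r)) 0 with h | h
  · have hzero : cnt (T ∩ Wedge X (l * r)) = 0 :=
      le_antisymm (h ▸ cnt_mono (inter_subset_inter_right _ (wedge_subset_ball X _))
        (hfin _ isBounded_ball)) (cnt_nonneg _)
    simp [hzero]
  · exact div_mul_div_cancel₀ h

lemma tendsto_cnt_smul_wedge_diff {T : Set E}
    (hfin : ∀ S : Set E, Bornology.IsBounded S → (T ∩ S).Finite)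
    (hang : AngularCond T) (hrad : RadialCond T) {X : Set E} (hX : IsAngularTestSet X)
    {m M : ℝ} (hm : 0 < m) (hmM : m ≤ M) :
    Tendsto (fun r => cnt (T ∩ r • (Wedge X M \ Wedge X m)) / NN T r) atTop
      (𝓝 ((volume (Wedge X M)).toReal / (volume (ball (0 : E) 1)).toReal -
        (volume (Wedge X m)).toReal / (volume (ball (0 : E) 1)).toReal)) := by
  refine ((tendsto_cnt_wedge_mul hfin hang hrad hX (hm.trans_le hmM)).sub
    (tendsto_cnt_wedge_mul hfin hang hrad hX hm)).congr' ?_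
  filter_upwards [eventually_gt_atTop 0] with r hr
  have hsub : T ∩ Wedge X (m * r) ⊆ T ∩ Wedge X (M * r) :=
    inter_subset_inter_right _ (wedge_mono X (by gcongr))
  rw [smul_set_sdiff₀ hr.ne', smul_wedge X hr, smul_wedge X hr, mul_comm r, mul_comm r,
    inter_sdiff_distrib_left, cnt_diff hsub (hfin _ ((isBounded_ball).subset
      (wedge_subset_ball X _))), sub_div]

lemma eventually_cnt_smul_div_lt_of_subset_wedge_diff {T : Set E}
    (hfin : ∀ S : Set E, Bornology.IsBounded S → (T ∩ S).Finite)
    (hang : AngularCond T) (hrad : RadialCond T) {X : Set E} (hX : IsAngularTestSet X)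
    {m M : ℝ} (hm : 0 < m) (hmM : m ≤ M) {K S : Set E} (hK : K ⊆ Wedge X M \ Wedge X m)
    (hS : Wedge X M \ Wedge X m ⊆ S) (hS_ne_top : volume S ≠ ⊤) {C : ℝ}
    (hC : (volume S).toReal < C * (volume (ball (0 : E) 1)).toReal) :
    ∀ᶠ r in atTop, cnt (T ∩ r • K) / NN T r < C := by
  have hB : 0 < (volume (ball (0 : E) 1)).toReal :=
    ENNReal.toReal_pos (measure_ball_pos volume 0 one_pos).ne' measure_ball_lt_top.ne
  have hm_ne_top : volume (Wedge X m) ≠ ⊤ :=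
    measure_ne_top_of_subset (wedge_subset_ball X m) measure_ball_lt_top.ne
  have hvol : (volume (Wedge X M)).toReal ≤ (volume (Wedge X m)).toReal + (volume S).toReal := by
    rw [← ENNReal.toReal_add hm_ne_top hS_ne_top]
    exact ENNReal.toReal_mono (ENNReal.add_ne_top.2 ⟨hm_ne_top, hS_ne_top⟩)
      ((measure_mono (sdiff_subset_iff.1 hS)).trans (measure_union_le _ _))
  have hlim : (volume (Wedge X M)).toReal / (volume (ball (0 : E) 1)).toReal -
      (volume (Wedge X m)).toReal / (volume (ball (0 : E) 1)).toReal < C := by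
    rw [div_sub_div_same, div_lt_iff₀ hB]
    linarith
  filter_upwards [(tendsto_cnt_smul_wedge_diff hfin hang hrad hX hm hmM).eventually_lt_const hlim]
    with r hr
  refine lt_of_le_of_lt (div_le_div_of_nonneg_right ?_ (NN_nonneg T r)) hr
  exact cnt_mono (inter_subset_inter_right _ (smul_set_mono hK)) (hfin _
    ((isBounded_ball.subset (sdiff_subset.trans (wedge_subset_ball X M))).smul₀ r))

lemma eventually_cnt_smul_closedBall_div_lt_of_far {T : Set E}
    (hfin : ∀ S : Set E, Bornology.IsBounded S → (T ∩ S).Finite)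
    (hang : AngularCond T) (hrad : RadialCond T) {p : E} {ρ : ℝ} (hρ : 0 < ρ)
    (hp : 4 * ρ ≤ ‖p‖) :
    ∀ᶠ r in atTop, cnt (T ∩ r • closedBall p ρ) / NN T r < 2 * (5 * ρ) ^ n := by
  have hpos : 0 < ‖p‖ := by linarith
  have hc : 0 ≤ 1 - (ρ / ‖p‖) ^ 2 := by
    rw [sub_nonneg, div_pow, div_le_one (by positivity)]
    nlinarith
  have hW := wedge_sphere_inter_openCone p (1 - (ρ / ‖p‖) ^ 2)
  refine eventually_cnt_smul_div_lt_of_subset_wedge_diff hfin hang hrad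
    (isAngularTestSet_sphere_inter_openCone p hc) (m := ‖p‖ - ρ) (M := ‖p‖ + 2 * ρ)
    (by linarith) (by linarith) (S := ball p (3 * ρ)) ?_ ?_ measure_ball_lt_top.ne ?_
  · intro z hz
    have hzp : ‖z - p‖ ≤ ρ := mem_closedBall_iff_norm.1 hz
    have hlo : ‖p‖ - ρ ≤ ‖z‖ := by linarith [norm_sub_norm_le p z, norm_sub_rev p z]
    have hhi : ‖z‖ ≤ ‖p‖ + ρ := by linarith [norm_sub_norm_le z p]
    rw [hW, hW]
    exact ⟨⟨mem_openCone_of_mem_closedBall hρ hp hz, mem_ball_zero_iff.2 (by linarith)⟩,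
      fun h => (mem_ball_zero_iff.1 h.2).not_ge hlo⟩
  · rw [hW, hW]
    rintro y ⟨⟨hyC, hyM⟩, hym⟩
    exact mem_ball_of_mem_openCone hρ hp hyC
      (not_lt.1 fun h => hym ⟨hyC, mem_ball_zero_iff.2 h⟩) (mem_ball_zero_iff.1 hyM)
  · have hB : 0 < (volume (ball (0 : E) 1)).toReal :=
      ENNReal.toReal_pos (measure_ball_pos volume 0 one_pos).ne' measure_ball_lt_top.ne
    rw [Measure.addHaar_ball_of_pos volume p (by positivity), finrank_euclideanSpace_fin,
      ENNReal.toReal_mul, ENNReal.toReal_ofReal (by positivity)]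
    gcongr
    calc (3 * ρ) ^ n ≤ (5 * ρ) ^ n := by gcongr; norm_num
      _ < 2 * (5 * ρ) ^ n := by linarith [pow_pos (by positivity : 0 < 5 * ρ) n]

lemma eventually_cnt_smul_closedBall_div_lt_of_near {T : Set E}
    (hfin : ∀ S : Set E, Bornology.IsBounded S → (T ∩ S).Finite)
    (hrad : RadialCond T) {p : E} {ρ : ℝ} (hρ : 0 < ρ) (hp : ‖p‖ < 4 * ρ) :
    ∀ᶠ r in atTop, cnt (T ∩ r • closedBall p ρ) / NN T r < 2 * (5 * ρ) ^ n := by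
  have hlt : (5 * ρ) ^ n < 2 * (5 * ρ) ^ n := by
    linarith [pow_pos (by positivity : 0 < 5 * ρ) n]
  filter_upwards [(hrad (5 * ρ) (by positivity)).eventually_lt_const hlt,
    eventually_gt_atTop 0] with r hr hr0
  refine lt_of_le_of_lt (div_le_div_of_nonneg_right
    (cnt_mono (inter_subset_inter_right _ ?_) (hfin _ isBounded_ball)) (NN_nonneg T r)) hr
  rintro _ ⟨z, hz, rfl⟩
  have hz' : ‖z‖ ≤ ‖p‖ + ρ := by linarith [norm_sub_norm_le z p, mem_closedBall_iff_norm.1 hz]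
  rw [mem_ball_zero_iff, norm_smul, Real.norm_of_nonneg hr0.le]
  nlinarith

lemma eventually_cnt_smul_closedBall_div_lt {T : Set E}
    (hfin : ∀ S : Set E, Bornology.IsBounded S → (T ∩ S).Finite)
    (hang : AngularCond T) (hrad : RadialCond T) (p : E) {ρ : ℝ} (hρ : 0 < ρ) :
    ∀ᶠ r in atTop, cnt (T ∩ r • closedBall p ρ) / NN T r < 2 * (5 * ρ) ^ n := by
  rcases lt_or_ge ‖p‖ (4 * ρ) with hp | hp
  · exact eventually_cnt_smul_closedBall_div_lt_of_near hfin hrad hρ hp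
  · exact eventually_cnt_smul_closedBall_div_lt_of_far hfin hang hrad hρ hp

/-- Jordan content zero, witnessed by covers with balls of a common radius. -/
def IsJordanNull (K : Set E) : Prop :=
  ∀ ε > 0, ∃ (s : Finset E) (ρ : ℝ), 0 < ρ ∧ K ⊆ ⋃ p ∈ s, closedBall p ρ ∧ s.card * ρ ^ n < ε

lemma IsJordanNull.mono {K K' : Set E} (hK' : IsJordanNull K') (h : K ⊆ K') : IsJordanNull K :=
  fun ε hε => (hK' ε hε).imp fun _ => .imp fun _ => .imp_right (.imp_left h.trans)

lemma IsJordanNull.tendsto_cnt_smul_div {T : Set E}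
    (hfin : ∀ S : Set E, Bornology.IsBounded S → (T ∩ S).Finite)
    (hang : AngularCond T) (hrad : RadialCond T) {K : Set E} (hK : IsJordanNull K) :
    Tendsto (fun r => cnt (T ∩ r • K) / NN T r) atTop (𝓝 0) := by
  rw [NormedAddGroup.tendsto_nhds_zero]
  intro ε hε
  obtain ⟨s, ρ, hρ, hcover, hsmall⟩ := hK (ε / (2 * 5 ^ n)) (by positivity)
  have hballs : ∀ᶠ r in atTop, ∀ p ∈ s,
      cnt (T ∩ r • closedBall p ρ) / NN T r < 2 * (5 * ρ) ^ n :=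
    (eventually_all_finset s).2 fun p _ =>
      eventually_cnt_smul_closedBall_div_lt hfin hang hrad p hρ
  filter_upwards [hballs] with r hr
  have hsub : T ∩ r • K ⊆ ⋃ p ∈ s, T ∩ r • closedBall p ρ := by
    rintro _ ⟨hxT, z, hz, rfl⟩
    obtain ⟨p, hp, hzp⟩ := mem_iUnion₂.1 (hcover hz)
    exact mem_iUnion₂.2 ⟨p, hp, hxT, smul_mem_smul_set hzp⟩
  have hfin_union : (⋃ p ∈ s, T ∩ r • closedBall p ρ).Finite :=
    s.finite_toSet.biUnion fun p _ => hfin _ (isBounded_closedBall.smul₀ r)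
  rw [Real.norm_of_nonneg (div_nonneg (cnt_nonneg _) (NN_nonneg T r))]
  calc cnt (T ∩ r • K) / NN T r
      ≤ (∑ p ∈ s, cnt (T ∩ r • closedBall p ρ)) / NN T r :=
        div_le_div_of_nonneg_right ((cnt_mono hsub hfin_union).trans (cnt_biUnion_le _ _))
          (NN_nonneg T r)
    _ ≤ ∑ _p ∈ s, 2 * (5 * ρ) ^ n := by
        rw [Finset.sum_div]
        exact Finset.sum_le_sum fun p hp => (hr p hp).le
    _ = 2 * 5 ^ n * (s.card * ρ ^ n) := by
        rw [Finset.sum_const, nsmul_eq_mul, mul_pow]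
        ring
    _ < ε := by rwa [← lt_div_iff₀' (by positivity)]

lemma isJordanNull_box {A B : Fin n → ℝ} {j : Fin n} (hj : A j = B j) :
    IsJordanNull {x : E | ∀ i, x i ∈ Icc (A i) (B i)} := by
  intro ε hε
  set P := ∏ i ∈ Finset.univ.erase j, (|B i - A i| + 1)
  obtain ⟨δ₀, hδ₀, hδ₀ε⟩ := exists_pos_mul_lt hε (√n ^ n * P)
  set δ := min δ₀ 1
  have hδ : 0 < δ := lt_min hδ₀ one_pos
  have hsqrt : 0 < √n := Real.sqrt_pos.2 (Nat.cast_pos.2 j.pos)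
  let pt : (∀ i, Fin (⌊(B i - A i) / δ⌋₊ + 1)) → E := fun κ =>
    WithLp.toLp 2 fun i => A i + δ * κ i
  refine ⟨Finset.univ.image pt, √n * δ, by positivity, fun x hx => ?_, ?_⟩
  · obtain ⟨κ, hκ⟩ := exists_grid_approx hδ hx
    refine mem_iUnion₂.2 ⟨pt κ, Finset.mem_image_of_mem _ (Finset.mem_univ _), ?_⟩
    simpa [pt] using dist_le_sqrt_card_mul (y := pt κ) hδ.le (by simpa [pt] using hκ)
  · have hP : 0 ≤ P := Finset.prod_nonneg fun i _ => by positivity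
    have hgrid := card_grid_mul_pow_le hδ (min_le_right _ _) hj
    rw [Fintype.card_fin] at hgrid
    calc ((Finset.univ.image pt).card : ℝ) * (√n * δ) ^ n
        ≤ √n ^ n * ((Fintype.card (∀ i, Fin (⌊(B i - A i) / δ⌋₊ + 1)) : ℝ) * δ ^ n) := by
          rw [mul_pow, mul_left_comm]
          gcongr
          exact_mod_cast Finset.card_image_le
      _ ≤ √n ^ n * (δ₀ * P) := mul_le_mul_of_nonneg_left
          (hgrid.trans (mul_le_mul_of_nonneg_right (min_le_left _ _) hP)) (by positivity)
      _ < ε := by linarith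

end Euclidean

theorem boundary_points_lemma_general
    {n : ℕ} (T : Set (EuclideanSpace ℝ (Fin n)))
    (hfin : ∀ S : Set (EuclideanSpace ℝ (Fin n)), Bornology.IsBounded S → (T ∩ S).Finite)
    (hang : AngularCond T) (hrad : RadialCond T)
    (a b : Fin n → ℝ)
    (j : Fin n) (c : ℝ) :
    Tendsto (fun r =>
        cnt (T ∩ r • {x : EuclideanSpace ℝ (Fin n) |
          (∀ i, x i ∈ Set.Icc (a i) (b i)) ∧ x j = c}) / NN T r)
      atTop (𝓝 0) := by
  have hbox : IsJordanNull {x : EuclideanSpace ℝ (Fin n) |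
      ∀ i, x i ∈ Icc (Function.update a j c i) (Function.update b j c i)} :=
    isJordanNull_box (j := j) (by simp)
  refine (hbox.mono ?_).tendsto_cnt_smul_div hfin hang hrad
  rintro x ⟨hx, rfl⟩ i
  rcases eq_or_ne i j with rfl | hij
  · simp
  · simpa [Function.update_of_ne hij] using hx i

theorem boundary_points_lemma
    {n : ℕ} (hn : 1 ≤ n) (T : Set (EuclideanSpace ℝ (Fin n)))
    (hTc : T.Countable) (hTi : T.Infinite)
    (hfin : ∀ S : Set (EuclideanSpace ℝ (Fin n)), Bornology.IsBounded S → (T ∩ S).Finite)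
    (hang : AngularCond T) (hrad : RadialCond T)
    (a b : Fin n → ℝ) (hab : ∀ i, a i ≤ b i)
    (j : Fin n) (c : ℝ) (hc : c = a j ∨ c = b j) :
    Tendsto (fun r =>
        cnt (T ∩ r • {x : EuclideanSpace ℝ (Fin n) |
          (∀ i, x i ∈ Set.Icc (a i) (b i)) ∧ x j = c}) / NN T r)
      atTop (𝓝 0) :=
  boundary_points_lemma_general T hfin hang hrad a b j c
end

section
/- For every n ≥ 1 and every u ∈ ℝⁿ with |u| ≤ 2, the Lebesgue measure of the lens-shaped region {v ∈ ℝⁿ : |v − u/2| ≤ 1 and |v + u/2| ≤ 1} (the intersection of the two closed unit balls centered at u/2 and −u/2) equals (π^{n/2} / Γ(n/2 + 1)) · I_{1−|u|²/4}((n+1)/2, 1/2). -/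
/-!
A reflection carries `u / 2` to `c • e₀` with `c = ‖u‖ / 2`, so we may assume the two centres lie
on the first axis. The slice of the lens at first coordinate `t` is a ball of radius
`√(1 - (|t| + c)²)` in `ℝⁿ⁻¹`, so by Cavalieri the volume is, with `V_k` the volume of the unit
`k`-ball, `V_{n-1} ∫_{-(1-c)}^{1-c} (1 - (|t| + c)²)^((n-1)/2) dt`, which by symmetry equals
`2 V_{n-1} ∫_c^1 (1 - s²)^((n-1)/2) ds`; the substitution `τ = 1 - s²` turns this into
`V_{n-1} B_{1-c²}((n+1)/2, 1/2)`. Finally `V_{n-1} = V_n / B((n+1)/2, 1/2)` by `Γ(1/2) = √π`.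
-/

open MeasureTheory Metric Filter Topology Real

/-- The incomplete Beta function `B_x(a, b) = ∫₀ˣ t^(a-1) (1-t)^(b-1) dt`. -/
noncomputable def incBeta (x a b : ℝ) : ℝ :=
  ∫ t in (0 : ℝ)..x, t ^ (a - 1) * (1 - t) ^ (b - 1)

/-- The (complete) Beta function `B(a, b) = Γ(a)Γ(b)/Γ(a+b)`. -/
noncomputable def betaFn (a b : ℝ) : ℝ :=
  Real.Gamma a * Real.Gamma b / Real.Gamma (a + b)

/-- The regularized incomplete Beta function `I_x(a, b) = B_x(a,b)/B(a,b)`. -/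
noncomputable def regIncBeta (x a b : ℝ) : ℝ :=
  incBeta x a b / betaFn a b

lemma incBeta_nonneg {x : ℝ} (a b : ℝ) (hx0 : 0 ≤ x) (hx1 : x ≤ 1) : 0 ≤ incBeta x a b :=
  intervalIntegral.integral_nonneg hx0 fun t ht => by
    have ht0 : 0 ≤ t := ht.1
    have ht1 : 0 ≤ 1 - t := by linarith [ht.2]
    positivity

lemma incBeta_one_sub_sq (p : ℝ) {c : ℝ} (hc : 0 ≤ c) :
    incBeta (1 - c ^ 2) (p + 1) (1 / 2) = 2 * ∫ s in c..1, (1 - s ^ 2) ^ p := by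
  have hsubst := intervalIntegral.integral_comp_mul_deriv_of_deriv_nonpos
    (g := fun t : ℝ => t ^ (p + 1 - 1) * (1 - t) ^ ((1 : ℝ) / 2 - 1))
    (f := fun s : ℝ => 1 - s ^ 2) (f' := fun s => -(2 * s)) (a := c) (b := 1)
    (by fun_prop) (fun s _ => by simpa using ((hasDerivAt_id s).pow 2).const_sub 1)
    (fun s hs => by linarith [(le_min hc zero_le_one).trans_lt hs.1])
  simp only [one_pow, sub_self] at hsubst
  rw [incBeta, intervalIntegral.integral_symm, ← hsubst, ← intervalIntegral.integral_neg,
    ← intervalIntegral.integral_const_mul]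
  refine intervalIntegral.integral_congr_ae (Filter.Eventually.of_forall fun s hs => ?_)
  have hs0 : 0 < s := (le_min hc zero_le_one).trans_lt hs.1
  have hsq : ((1 : ℝ) - (1 - s ^ 2)) ^ ((1 : ℝ) / 2 - 1) = s⁻¹ := by
    rw [sub_sub_cancel, ← Real.rpow_natCast, ← Real.rpow_mul hs0.le]
    norm_num [Real.rpow_neg_one]
  simp only [Function.comp_apply, add_sub_cancel_right, hsq]
  field_simp

lemma intervalIntegral.integral_comp_abs_add {f : ℝ → ℝ} (hf : Continuous f) {a : ℝ} (ha : 0 ≤ a)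
    (c : ℝ) : ∫ t in -a..a, f (|t| + c) = 2 * ∫ s in c..a + c, f s := by
  have hg : Continuous fun t => f (|t| + c) := by fun_prop
  have hneg : ∫ t in -a..0, f (|t| + c) = ∫ t in 0..a, f (|t| + c) := by
    simpa using (intervalIntegral.integral_comp_neg (a := 0) (b := a) (fun t => f (|t| + c))).symm
  have hpos : ∫ t in 0..a, f (|t| + c) = ∫ s in c..a + c, f s := by
    have hab : Set.EqOn (fun t => f (|t| + c)) (fun t => f (t + c)) (Set.uIcc 0 a) := fun t ht => by
      rw [Set.uIcc_of_le ha] at ht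
      simp only [abs_of_nonneg ht.1]
    rw [intervalIntegral.integral_congr hab, intervalIntegral.integral_comp_add_right, zero_add]
  rw [← intervalIntegral.integral_add_adjacent_intervals (hg.intervalIntegrable (-a) 0)
    (hg.intervalIntegrable 0 a), hneg, hpos, two_mul]

lemma pi_rpow_div_Gamma_div_betaFn (m : ℕ) :
    π ^ (((m + 1 : ℕ) : ℝ) / 2) / Gamma (((m + 1 : ℕ) : ℝ) / 2 + 1) /
        betaFn ((m : ℝ) / 2 + 1) (1 / 2) = √π ^ m / Gamma ((m : ℝ) / 2 + 1) := by
  have hpi : π ^ (((m + 1 : ℕ) : ℝ) / 2) = √π ^ m * √π := by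
    rw [Real.rpow_div_two_eq_sqrt _ pi_pos.le, Real.rpow_natCast, pow_succ]
  have hΓ : (m : ℝ) / 2 + 1 + 1 / 2 = ((m + 1 : ℕ) : ℝ) / 2 + 1 := by push_cast; ring
  have hΓ₁ : 0 < Gamma ((m : ℝ) / 2 + 1) := Gamma_pos_of_pos (by positivity)
  have hΓ₂ : 0 < Gamma (((m + 1 : ℕ) : ℝ) / 2 + 1) := Gamma_pos_of_pos (by positivity)
  have hsqrt : 0 < √π := Real.sqrt_pos.mpr pi_pos
  rw [betaFn, hΓ, Gamma_one_half_eq, hpi]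
  field_simp

section Lens

variable {E : Type*} [NormedAddCommGroup E] [InnerProductSpace ℝ E] [FiniteDimensional ℝ E]
  [MeasurableSpace E] [BorelSpace E]

lemma volume_closedBall_inter_closedBall_neg_congr {a b : E} (hab : ‖a‖ = ‖b‖) (r : ℝ) :
    volume (closedBall a r ∩ closedBall (-a) r) = volume (closedBall b r ∩ closedBall (-b) r) := by
  set R := (ℝ ∙ (a - b))ᗮ.reflection
  have hRb : R.symm b = a := R.symm_apply_eq.mpr (Submodule.reflection_sub hab).symm
  have hpre : R ⁻¹' (closedBall b r ∩ closedBall (-b) r) = closedBall a r ∩ closedBall (-a) r := by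
    rw [Set.preimage_inter, LinearIsometryEquiv.preimage_closedBall,
      LinearIsometryEquiv.preimage_closedBall, map_neg, hRb]
  rw [← hpre, R.measurePreserving.measure_preimage
    (measurableSet_closedBall.inter measurableSet_closedBall).nullMeasurableSet]

end Lens

lemma dist_smul_single_zero_sq {m : ℕ} (x : EuclideanSpace ℝ (Fin (m + 1))) (c : ℝ) :
    dist x (c • EuclideanSpace.single 0 1) ^ 2 = (x 0 - c) ^ 2 + ∑ j : Fin m, x j.succ ^ 2 := by
  rw [EuclideanSpace.dist_eq, Real.sq_sqrt (by positivity), Fin.sum_univ_succ]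
  simp [Fin.succ_ne_zero, Real.dist_eq, sq_abs]

def lensSlab (m : ℕ) (c : ℝ) : Set (ℝ × (Fin m → ℝ)) :=
  {p | (p.1 - c) ^ 2 + ∑ j, p.2 j ^ 2 ≤ 1 ∧ (p.1 + c) ^ 2 + ∑ j, p.2 j ^ 2 ≤ 1}

lemma measurableSet_lensSlab (m : ℕ) (c : ℝ) : MeasurableSet (lensSlab m c) := by
  rw [lensSlab, Set.ofPred_and]
  exact (measurableSet_le (by fun_prop) measurable_const).inter
    (measurableSet_le (by fun_prop) measurable_const)

lemma volume_closedBall_inter_closedBall_neg_smul_single (m : ℕ) (c : ℝ) :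
    volume (closedBall (c • EuclideanSpace.single (0 : Fin (m + 1)) (1 : ℝ)) 1 ∩
        closedBall (-(c • EuclideanSpace.single 0 1)) 1) = volume (lensSlab m c) := by
  have hF : MeasurePreserving ((MeasurableEquiv.toLp 2 (Fin (m + 1) → ℝ)).symm.trans
      (MeasurableEquiv.piFinSuccAbove (fun _ => ℝ) 0)) :=
    (volume_preserving_piFinSuccAbove (fun _ => ℝ) 0).comp
      (EuclideanSpace.volume_preserving_symm_measurableEquiv_toLp (Fin (m + 1)))
  rw [← hF.measure_preimage (measurableSet_lensSlab m c).nullMeasurableSet]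
  congr 1
  ext x
  simp only [Set.mem_inter_iff, mem_closedBall, ← sq_le_one_iff₀ dist_nonneg, ← neg_smul,
    dist_smul_single_zero_sq, sub_neg_eq_add]
  rfl

lemma preimage_mk_lensSlab (m : ℕ) {c : ℝ} (hc : 0 ≤ c) (t : ℝ) :
    Prod.mk t ⁻¹' lensSlab m c = {y | ∑ j, y j ^ 2 ≤ 1 - (|t| + c) ^ 2} := by
  have hmax : max ((t - c) ^ 2) ((t + c) ^ 2) = (|t| + c) ^ 2 := by
    rcases abs_cases t with ⟨ht, _⟩ | ⟨ht, _⟩ <;> rw [ht]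
    · exact max_eq_right (by nlinarith)
    · rw [max_eq_left (by nlinarith)]; ring
  ext y
  simp only [lensSlab, Set.mem_preimage, Set.mem_ofPred_eq, ← le_sub_iff_add_le, ← max_le_iff,
    hmax, le_sub_comm]

lemma volume_setOf_sum_sq_le (m : ℕ) {r : ℝ} (hr : 0 ≤ r) :
    volume {y : Fin m → ℝ | ∑ i, y i ^ 2 ≤ r} =
      ENNReal.ofReal (√r ^ m * (√π ^ m / Gamma ((m : ℝ) / 2 + 1))) := by
  cases m with
  | zero => simp [hr, Gamma_one, volume_pi]
  | succ m =>
    have hball : {y : Fin (m + 1) → ℝ | ∑ i, y i ^ 2 ≤ r} =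
        WithLp.toLp 2 ⁻¹' closedBall (0 : EuclideanSpace ℝ (Fin (m + 1))) √r := by
      ext y
      simp [EuclideanSpace.norm_eq, Real.sqrt_le_sqrt_iff hr, sq_abs]
    rw [hball, (PiLp.volume_preserving_toLp (Fin (m + 1))).measure_preimage
      measurableSet_closedBall.nullMeasurableSet, EuclideanSpace.volume_closedBall,
      ENNReal.ofReal_mul (by positivity), ENNReal.ofReal_pow (Real.sqrt_nonneg _)]
    simp

lemma volume_lensSlab (m : ℕ) {c : ℝ} (hc0 : 0 ≤ c) (hc1 : c ≤ 1) :
    volume (lensSlab m c) = ENNReal.ofReal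
      (√π ^ m / Gamma ((m : ℝ) / 2 + 1) * incBeta (1 - c ^ 2) ((m : ℝ) / 2 + 1) (1 / 2)) := by
  set V := √π ^ m / Gamma ((m : ℝ) / 2 + 1)
  set a := 1 - c
  set g : ℝ → ℝ := fun t => √(1 - (|t| + c) ^ 2) ^ m * V
  have hg : Continuous g := by fun_prop
  have hslice : ∀ t, volume (Prod.mk t ⁻¹' lensSlab m c) =
      (Set.Icc (-a) a).indicator (fun t => ENNReal.ofReal (g t)) t := by
    intro t
    rw [preimage_mk_lensSlab m hc0]
    by_cases ht : t ∈ Set.Icc (-a) a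
    · have hr : 0 ≤ 1 - (|t| + c) ^ 2 := by
        have := abs_le.mpr ht
        nlinarith [abs_nonneg t]
      rw [Set.indicator_of_mem ht, volume_setOf_sum_sq_le m hr]
    · have hr : 1 - (|t| + c) ^ 2 < 0 := by
        have : a < |t| := lt_of_not_ge fun h => ht (abs_le.mp h)
        nlinarith
      have hempty : {y : Fin m → ℝ | ∑ j, y j ^ 2 ≤ 1 - (|t| + c) ^ 2} = ∅ :=
        Set.eq_empty_of_forall_notMem fun y hy =>
          hr.not_ge ((Finset.sum_nonneg fun j _ => sq_nonneg (y j)).trans hy)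
      rw [Set.indicator_of_notMem ht, hempty, measure_empty]
  have hsqrt : ∀ s ∈ Set.uIcc c 1, √(1 - s ^ 2) ^ m = (1 - s ^ 2) ^ ((m : ℝ) / 2) := fun s hs => by
    rw [Set.uIcc_of_le hc1] at hs
    rw [rpow_div_two_eq_sqrt _ (by nlinarith [hs.1, hs.2]), rpow_natCast]
  calc volume (lensSlab m c)
      = ∫⁻ t, volume (Prod.mk t ⁻¹' lensSlab m c) := by
        rw [Measure.volume_eq_prod, Measure.prod_apply (measurableSet_lensSlab m c)]
    _ = ∫⁻ t in Set.Icc (-a) a, ENNReal.ofReal (g t) := by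
        rw [lintegral_congr hslice, lintegral_indicator measurableSet_Icc]
    _ = ENNReal.ofReal (∫ t in -a..a, g t) := by
        rw [intervalIntegral.integral_of_le (by linarith), ← integral_Icc_eq_integral_Ioc,
          ofReal_integral_eq_lintegral_ofReal hg.integrableOn_Icc
            (Filter.Eventually.of_forall fun t => by positivity)]
    _ = ENNReal.ofReal (V * incBeta (1 - c ^ 2) ((m : ℝ) / 2 + 1) (1 / 2)) := by
        rw [intervalIntegral.integral_mul_const,
          intervalIntegral.integral_comp_abs_add (f := fun s => √(1 - s ^ 2) ^ m) (by fun_prop)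
            (by linarith), sub_add_cancel, intervalIntegral.integral_congr hsqrt,
          incBeta_one_sub_sq _ hc0, mul_comm]

theorem volume_lens
    {n : ℕ} (hn : 1 ≤ n) (u : EuclideanSpace ℝ (Fin n)) (hu : ‖u‖ ≤ 2) :
    (volume {v : EuclideanSpace ℝ (Fin n) |
        ‖v - (1 / 2 : ℝ) • u‖ ≤ 1 ∧ ‖v + (1 / 2 : ℝ) • u‖ ≤ 1}).toReal =
      Real.pi ^ ((n : ℝ) / 2) / Real.Gamma ((n : ℝ) / 2 + 1) *
        regIncBeta (1 - ‖u‖ ^ 2 / 4) (((n : ℝ) + 1) / 2) (1 / 2) := by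
  obtain ⟨m, rfl⟩ : ∃ m, n = m + 1 := ⟨n - 1, by omega⟩
  set c := ‖u‖ / 2 with hc
  have hc0 : 0 ≤ c := by positivity
  have hc1 : c ≤ 1 := by linarith
  have hlens : {v : EuclideanSpace ℝ (Fin (m + 1)) |
      ‖v - (1 / 2 : ℝ) • u‖ ≤ 1 ∧ ‖v + (1 / 2 : ℝ) • u‖ ≤ 1} =
      closedBall ((1 / 2 : ℝ) • u) 1 ∩ closedBall (-((1 / 2 : ℝ) • u)) 1 := by
    ext v
    simp [dist_eq_norm]
  have hnorm : ‖(1 / 2 : ℝ) • u‖ = ‖c • EuclideanSpace.single (0 : Fin (m + 1)) (1 : ℝ)‖ := by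
    simp [norm_smul, hc]
    ring
  have hvol : 0 ≤ √π ^ m / Gamma ((m : ℝ) / 2 + 1) *
      incBeta (1 - c ^ 2) ((m : ℝ) / 2 + 1) (1 / 2) :=
    mul_nonneg (by positivity) (incBeta_nonneg _ _ (by nlinarith) (by nlinarith))
  rw [hlens, volume_closedBall_inter_closedBall_neg_congr hnorm,
    volume_closedBall_inter_closedBall_neg_smul_single, volume_lensSlab m hc0 hc1,
    ENNReal.toReal_ofReal hvol,
    ← pi_rpow_div_Gamma_div_betaFn, regIncBeta, show 1 - ‖u‖ ^ 2 / 4 = 1 - c ^ 2 by ring,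
    show (((m + 1 : ℕ) : ℝ) + 1) / 2 = (m : ℝ) / 2 + 1 by push_cast; ring]
  ring
end
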